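/- arXiv:2307.07830 — 5 statements merged into one kernel-verified Lean document; each statement's English description precedes it below -/
import Mathlib

section
/- Let X be a complete separable metric space (a metric space that is a complete uniform space and has a countable dense subset), equipped with its metric topology. Let p : Set X → Prop satisfy: p ∅ is false; p X is true; for all open sets U, V ⊆ X, p (U ∩ V) ↔ (p U ∧ p V); and for every sequence (U_n)_{n∈ℕ} of open subsets of X, p (⋃_n U_n) ↔ ∃ n, p (U_n). Then there exists a unique point x ∈ X such that for every open set U ⊆ X, p U ↔ x ∈ U. -/
/-!
The open sets on which `p` holds form a filter base of a proper filter `F`. Covering `X` by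
countably many `ε`-balls centred at a countable dense set, some `ε`-ball satisfies `p`, so `F` is
Cauchy and converges to a point `x`. Every neighbourhood of `x` contains a member of `F`, hence
satisfies `p`. Conversely, by regularity and second countability an open `U` is a countable union
of open `V` with `closure V ⊆ U`; if `p U` then `p V` for one of them, and `x`, a cluster point
of `F`, lies in `closure V ⊆ U`. Uniqueness of `x` is the `T₀` property.
-/

open Set Filter Topology TopologicalSpace Metric

/-- A σ-frame homomorphism from the open sets of `X` to `Prop`; its values on non-open sets play
no role. -/
structure IsSigmaFrameHom {X : Type*} [TopologicalSpace X] (p : Set X → Prop) : Prop where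
  bot : ¬ p ∅
  top : p univ
  meet : ∀ U V : Set X, IsOpen U → IsOpen V → (p (U ∩ V) ↔ p U ∧ p V)
  join : ∀ U : ℕ → Set X, (∀ n, IsOpen (U n)) → (p (⋃ n, U n) ↔ ∃ n, p (U n))

/-- For `p = (x ∈ ·)` this is `𝓝 x`. -/
def sigmaFrameNhds {X : Type*} [TopologicalSpace X] (p : Set X → Prop) : Filter X :=
  ⨅ (U : Set X) (_ : IsOpen U ∧ p U), 𝓟 U

theorem TopologicalSpace.IsTopologicalBasis.sUnion_closure_subset {X : Type*}
    [TopologicalSpace X] [RegularSpace X] {B : Set (Set X)} (hB : IsTopologicalBasis B)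
    {U : Set X} (hU : IsOpen U) : ⋃₀ {V ∈ B | closure V ⊆ U} = U := by
  refine (sUnion_subset fun V hV => subset_closure.trans hV.2).antisymm fun x hx => ?_
  obtain ⟨V, hVB, hxV, hVU⟩ := hB.exists_closure_subset (hU.mem_nhds hx)
  exact ⟨V, ⟨hVB, hVU⟩, hxV⟩

namespace IsSigmaFrameHom

section Topological

variable {X : Type*} [TopologicalSpace X] {p : Set X → Prop}

theorem mono (hp : IsSigmaFrameHom p) {U V : Set X} (hU : IsOpen U) (hV : IsOpen V)
    (hUV : U ⊆ V) (h : p U) : p V :=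
  ((hp.meet U V hU hV).1 (by rwa [inter_eq_left.2 hUV])).2

theorem sUnion_iff (hp : IsSigmaFrameHom p) {S : Set (Set X)} (hS : S.Countable)
    (hSo : ∀ V ∈ S, IsOpen V) : p (⋃₀ S) ↔ ∃ V ∈ S, p V := by
  rcases S.eq_empty_or_nonempty with rfl | hne
  · simpa using hp.bot
  obtain ⟨U, rfl⟩ := hS.exists_eq_range hne
  simpa using hp.join U fun n => hSo _ (mem_range_self n)

theorem hasBasis_sigmaFrameNhds (hp : IsSigmaFrameHom p) :
    (sigmaFrameNhds p).HasBasis (fun U => IsOpen U ∧ p U) id :=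
  hasBasis_biInf_principal'
    (fun U hU V hV => ⟨U ∩ V, ⟨hU.1.inter hV.1, (hp.meet U V hU.1 hV.1).2 ⟨hU.2, hV.2⟩⟩,
      inter_subset_left, inter_subset_right⟩)
    ⟨univ, isOpen_univ, hp.top⟩

theorem neBot_sigmaFrameNhds (hp : IsSigmaFrameHom p) : NeBot (sigmaFrameNhds p) :=
  hp.hasBasis_sigmaFrameNhds.neBot_iff.2 fun hU =>
    nonempty_iff_ne_empty.2 fun h => hp.bot (h ▸ hU.2)

theorem of_mem_of_le_nhds (hp : IsSigmaFrameHom p) {x : X} (hx : sigmaFrameNhds p ≤ 𝓝 x)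
    {U : Set X} (hU : IsOpen U) (hxU : x ∈ U) : p U := by
  obtain ⟨V, ⟨hV, hpV⟩, hVU⟩ := hp.hasBasis_sigmaFrameNhds.mem_iff.1 (hx (hU.mem_nhds hxU))
  exact hp.mono hV hU hVU hpV

theorem mem_of_le_nhds [RegularSpace X] [SecondCountableTopology X] (hp : IsSigmaFrameHom p)
    {x : X} (hx : sigmaFrameNhds p ≤ 𝓝 x) {U : Set X} (hU : IsOpen U) (hpU : p U) : x ∈ U := by
  have hB := isBasis_countableBasis X
  obtain ⟨V, ⟨hVB, hVU⟩, hpV⟩ :=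
    (hp.sUnion_iff ((countable_countableBasis X).mono (sep_subset _ _))
      fun V hV => hB.isOpen hV.1).1 (hB.sUnion_closure_subset hU ▸ hpU)
  have hclust : ClusterPt x (sigmaFrameNhds p) := .of_le_nhds' hx hp.neBot_sigmaFrameNhds
  exact hVU (hclust.mem_closure_of_mem _
    (hp.hasBasis_sigmaFrameNhds.mem_of_mem ⟨hB.isOpen hVB, hpV⟩))

end Topological

section Metric

variable {X : Type*} [PseudoMetricSpace X] [SeparableSpace X] {p : Set X → Prop}

theorem exists_ball (hp : IsSigmaFrameHom p) {r : ℝ} (hr : 0 < r) : ∃ c, p (ball c r) := by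
  obtain ⟨D, hDc, hD⟩ := exists_countable_dense X
  have hcover : ⋃₀ ((ball · r) '' D) = univ := by
    rw [sUnion_image]
    exact (dense_iff_iUnion_ball D).1 hD r hr
  obtain ⟨_, ⟨c, -, rfl⟩, hc⟩ :=
    (hp.sUnion_iff (hDc.image _) (forall_mem_image.2 fun _ _ => isOpen_ball)).1
      (hcover ▸ hp.top)
  exact ⟨c, hc⟩

theorem cauchy_sigmaFrameNhds (hp : IsSigmaFrameHom p) : Cauchy (sigmaFrameNhds p) := by
  refine Metric.cauchy_iff.2 ⟨hp.neBot_sigmaFrameNhds, fun ε hε => ?_⟩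
  obtain ⟨c, hc⟩ := hp.exists_ball (half_pos hε)
  refine ⟨ball c (ε / 2), hp.hasBasis_sigmaFrameNhds.mem_of_mem ⟨isOpen_ball, hc⟩,
    fun x hx y hy => ?_⟩
  calc dist x y ≤ dist x c + dist y c := dist_triangle_right x y c
    _ < ε / 2 + ε / 2 := add_lt_add hx hy
    _ = ε := add_halves ε

end Metric

end IsSigmaFrameHom

/-- A complete separable metric space is sober in the σ-frame sense: every
σ-frame homomorphism from the metric topology to truth values is the
neighborhood filter of a unique point. -/
theorem complete_separable_metric_sober {X : Type*} [MetricSpace X] [CompleteSpace X]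
    [TopologicalSpace.SeparableSpace X]
    (p : Set X → Prop)
    (hbot : ¬ p ∅)
    (htop : p Set.univ)
    (hmeet : ∀ U V : Set X, IsOpen U → IsOpen V → (p (U ∩ V) ↔ (p U ∧ p V)))
    (hjoin : ∀ U : ℕ → Set X, (∀ n, IsOpen (U n)) → (p (⋃ n, U n) ↔ ∃ n, p (U n))) :
    ∃! x : X, ∀ U : Set X, IsOpen U → (p U ↔ x ∈ U) := by
  have hp : IsSigmaFrameHom p := ⟨hbot, htop, hmeet, hjoin⟩
  obtain ⟨x, hx⟩ := CompleteSpace.complete hp.cauchy_sigmaFrameNhds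
  have hxp : ∀ U : Set X, IsOpen U → (p U ↔ x ∈ U) := fun U hU =>
    ⟨hp.mem_of_le_nhds hx hU, hp.of_mem_of_le_nhds hx hU⟩
  exact ⟨x, hxp, fun y hy =>
    (inseparable_iff_forall_isOpen.2 fun U hU => (hy U hU).symm.trans (hxp U hU)).eq⟩
end

section
/- Let P be an ω-algebraic ω-complete partial order: an ω-complete partial order such that the set of compact elements of P is countable and every y ∈ P is the least upper bound of some chain of compact elements all lying below y. Let p : Set P → Prop satisfy: p ∅ is false; p P is true; for all ω-Scott-open sets U, V ⊆ P, p (U ∩ V) ↔ (p U ∧ p V); and for every sequence (U_n)_{n∈ℕ} of ω-Scott-open sets, p (⋃_n U_n) ↔ ∃ n, p (U_n). Then there exists a unique z ∈ P such that for every ω-Scott-open set U ⊆ P, p U ↔ z ∈ U. -/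
open OmegaCompletePartialOrder

/-- A set is ω-Scott-open when it is upward closed and inaccessible by suprema
of chains. -/
def IsOmegaScottOpen {P : Type*} [OmegaCompletePartialOrder P] (U : Set P) : Prop :=
  (∀ x y : P, x ∈ U → x ≤ y → y ∈ U) ∧
  (∀ c : Chain P, ωSup c ∈ U → ∃ n : ℕ, c n ∈ U)

/-- An element is compact when it is way below itself. -/
def IsCompactElt {P : Type*} [OmegaCompletePartialOrder P] (x : P) : Prop :=
  ∀ c : Chain P, x ≤ ωSup c → ∃ n : ℕ, x ≤ c n

lemma upset_open {P : Type*} [OmegaCompletePartialOrder P] {k : P}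
    (hk : IsCompactElt k) : IsOmegaScottOpen {y : P | k ≤ y} := by
  constructor
  · intro x y hx hxy; exact le_trans hx hxy
  · intro c hc; exact hk c hc

lemma inter_open {P : Type*} [OmegaCompletePartialOrder P] {U V : Set P}
    (hU : IsOmegaScottOpen U) (hV : IsOmegaScottOpen V) :
    IsOmegaScottOpen (U ∩ V) := by
  constructor
  · intro x y hx hxy; exact ⟨hU.1 x y hx.1 hxy, hV.1 x y hx.2 hxy⟩
  · intro c hc
    obtain ⟨n, hn⟩ := hU.2 c hc.1
    obtain ⟨m, hm⟩ := hV.2 c hc.2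
    refine ⟨max n m, ⟨hU.1 _ _ hn (c.mono (le_max_left n m)),
      hV.1 _ _ hm (c.mono (le_max_right n m))⟩⟩

/-- The Scott topology of an ω-algebraic ω-cpo is sober in the σ-frame sense:
every σ-frame homomorphism from the lattice of ω-Scott-open sets to truth
values is the neighborhood filter of a unique point. -/
theorem omega_algebraic_scott_sober {P : Type*} [OmegaCompletePartialOrder P]
    (hcomp : {x : P | IsCompactElt x}.Countable)
    (halg : ∀ y : P, ∃ c : Chain P,
      (∀ n : ℕ, IsCompactElt (c n) ∧ c n ≤ y) ∧ ωSup c = y)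
    (p : Set P → Prop)
    (hbot : ¬ p ∅)
    (htop : p Set.univ)
    (hmeet : ∀ U V : Set P, IsOmegaScottOpen U → IsOmegaScottOpen V →
      (p (U ∩ V) ↔ (p U ∧ p V)))
    (hjoin : ∀ U : ℕ → Set P, (∀ n, IsOmegaScottOpen (U n)) →
      (p (⋃ n, U n) ↔ ∃ n, p (U n))) :
    ∃! z : P, ∀ U : Set P, IsOmegaScottOpen U → (p U ↔ z ∈ U) := by
  classical
  -- monotonicity of p on opens
  have pmono : ∀ U V : Set P, IsOmegaScottOpen U → IsOmegaScottOpen V →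
      U ⊆ V → p U → p V := by
    intro U V hU hV hUV hpU
    have : U ∩ V = U := Set.inter_eq_left.mpr hUV
    have := (hmeet U V hU hV).mp (by rw [this]; exact hpU)
    exact this.2
  -- key lemma: p U ↔ ∃ compact k ∈ U with p ↑k
  have key : ∀ U : Set P, IsOmegaScottOpen U →
      (p U ↔ ∃ k : P, IsCompactElt k ∧ k ∈ U ∧ p {y : P | k ≤ y}) := by
    intro U hU
    constructor
    · intro hpU
      set S : Set P := {k : P | IsCompactElt k ∧ k ∈ U} with hS
      have hSc : S.Countable := hcomp.mono (fun k hk => hk.1)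
      have hSne : S.Nonempty := by
        rcases Set.nonempty_iff_ne_empty.mpr (fun hE => hbot (hE ▸ hpU)) with ⟨y, hy⟩
        obtain ⟨c, hc1, hc2⟩ := halg y
        obtain ⟨n, hn⟩ := hU.2 c (by rw [hc2]; exact hy)
        exact ⟨c n, (hc1 n).1, hn⟩
      obtain ⟨f, hf⟩ := hSc.exists_eq_range hSne
      have hfS : ∀ n, f n ∈ S := by
        intro n; rw [hf]; exact ⟨n, rfl⟩
      have hUeq : U = ⋃ n, {y : P | f n ≤ y} := by
        apply Set.Subset.antisymm
        · intro y hy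
          obtain ⟨c, hc1, hc2⟩ := halg y
          obtain ⟨n, hn⟩ := hU.2 c (by rw [hc2]; exact hy)
          have : c n ∈ S := ⟨(hc1 n).1, hn⟩
          rw [hf] at this
          obtain ⟨m, hm⟩ := this
          exact Set.mem_iUnion.mpr ⟨m, by simp [hm]; exact (hc1 n).2⟩
        · intro y hy
          obtain ⟨n, hn⟩ := Set.mem_iUnion.mp hy
          exact hU.1 (f n) y (hfS n).2 hn
      have := (hjoin (fun n => {y : P | f n ≤ y})
        (fun n => upset_open (hfS n).1)).mp (hUeq ▸ hpU)
      obtain ⟨n, hn⟩ := this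
      exact ⟨f n, (hfS n).1, (hfS n).2, hn⟩
    · rintro ⟨k, hk, hkU, hpk⟩
      exact pmono _ _ (upset_open hk) hU (fun y hy => hU.1 k y hkU hy) hpk
  -- the set of compacts whose upset is accepted
  set F : Set P := {k : P | IsCompactElt k ∧ p {y : P | k ≤ y}} with hF
  have hFc : F.Countable := hcomp.mono (fun k hk => hk.1)
  have hFne : F.Nonempty := by
    have hUopen : IsOmegaScottOpen (Set.univ : Set P) :=
      ⟨fun _ _ _ _ => trivial, fun c _ => ⟨0, trivial⟩⟩
    obtain ⟨k, hk1, _, hk3⟩ := (key _ hUopen).mp htop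
    exact ⟨k, hk1, hk3⟩
  have hdir : ∀ a b : P, a ∈ F → b ∈ F → ∃ d, d ∈ F ∧ a ≤ d ∧ b ≤ d := by
    intro a b ha hb
    have hW : IsOmegaScottOpen ({y : P | a ≤ y} ∩ {y : P | b ≤ y}) :=
      inter_open (upset_open ha.1) (upset_open hb.1)
    have hpW : p ({y : P | a ≤ y} ∩ {y : P | b ≤ y}) :=
      (hmeet _ _ (upset_open ha.1) (upset_open hb.1)).mpr ⟨ha.2, hb.2⟩
    obtain ⟨k, hk1, hk2, hk3⟩ := (key _ hW).mp hpW
    exact ⟨k, ⟨hk1, hk3⟩, hk2.1, hk2.2⟩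
  obtain ⟨g, hg⟩ := hFc.exists_eq_range hFne
  have hgF : ∀ n, g n ∈ F := fun n => by rw [hg]; exact ⟨n, rfl⟩
  -- build a cofinal chain in F
  let h : ℕ → {x : P // x ∈ F} := fun n => Nat.rec ⟨g 0, hgF 0⟩
    (fun m prev => ⟨(hdir prev.1 (g (m+1)) prev.2 (hgF (m+1))).choose,
      (hdir prev.1 (g (m+1)) prev.2 (hgF (m+1))).choose_spec.1⟩) n
  have hstep : ∀ n, (h n).1 ≤ (h (n+1)).1 ∧ g (n+1) ≤ (h (n+1)).1 := by
    intro n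
    exact ⟨(hdir (h n).1 (g (n+1)) (h n).2 (hgF (n+1))).choose_spec.2.1,
      (hdir (h n).1 (g (n+1)) (h n).2 (hgF (n+1))).choose_spec.2.2⟩
  have hmonoh : Monotone (fun n => (h n).1) :=
    monotone_nat_of_le_succ (fun n => (hstep n).1)
  have hgh : ∀ n, g n ≤ (h n).1 := by
    intro n
    cases n with
    | zero => exact le_refl _
    | succ m => exact (hstep m).2
  let c : Chain P := ⟨fun n => (h n).1, hmonoh⟩
  set z : P := ωSup c with hz
  have hzprop : ∀ U : Set P, IsOmegaScottOpen U → (p U ↔ z ∈ U) := by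
    intro U hU
    constructor
    · intro hpU
      obtain ⟨k, hk1, hk2, hk3⟩ := (key U hU).mp hpU
      have hkF : k ∈ F := ⟨hk1, hk3⟩
      rw [hg] at hkF
      obtain ⟨n, hn⟩ := hkF
      have hkz : k ≤ z := by
        rw [← hn]; exact le_trans (hgh n) (le_ωSup c n)
      exact hU.1 k z hk2 hkz
    · intro hzU
      obtain ⟨n, hn⟩ := hU.2 c hzU
      have hcF : (h n).1 ∈ F := (h n).2
      exact pmono _ _ (upset_open hcF.1) hU
        (fun y hy => hU.1 _ y hn hy) hcF.2
  refine ⟨z, hzprop, ?_⟩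
  intro y hy
  have hsep : ∀ w₁ w₂ : P, (∀ U : Set P, IsOmegaScottOpen U → (p U ↔ w₁ ∈ U)) →
      (∀ U : Set P, IsOmegaScottOpen U → (p U ↔ w₂ ∈ U)) → w₁ ≤ w₂ := by
    intro w₁ w₂ h1 h2
    obtain ⟨d, hd1, hd2⟩ := halg w₁
    rw [← hd2]
    apply ωSup_le
    intro n
    have hOpen := upset_open (hd1 n).1
    have : w₁ ∈ {y : P | d n ≤ y} := (hd1 n).2
    exact (h2 _ hOpen).mp ((h1 _ hOpen).mpr this)
  exact le_antisymm (hsep y z hy hzprop) (hsep z y hzprop hy)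
end

section
/- Let L and M be frames (complete lattices in which binary meets distribute over arbitrary joins), let b : ℕ → L be a countable base of L, i.e., for every x ∈ L there is T ⊆ ℕ with x = ⨆_{k∈T} b k, and let f : ℕ → M. Then the following are equivalent: (a) there exists a function φ : L → M preserving the top element, binary infima, and arbitrary suprema such that φ (b n) = f n for all n ∈ ℕ; (b) f satisfies: (1) for all T, T' ⊆ ℕ, if ⨆_{k∈T} b k = ⨆_{m∈T'} b m then ⨆_{k∈T} f k = ⨆_{m∈T'} f m; (2) ⨆_{n∈ℕ} f n = ⊤; and (3) for all T, T', T'' ⊆ ℕ, if (⨆_{k∈T} b k) ⊓ (⨆_{m∈T'} b m) = ⨆_{n∈T''} b n then (⨆_{k∈T} f k) ⊓ (⨆_{m∈T'} f m) = ⨆_{n∈T''} f n. Moreover, when these hold, φ is unique and satisfies φ (⨆_{n∈T} b n) = ⨆_{n∈T} f n for every T ⊆ ℕ. -/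
/-- Equational characterization of frame homomorphisms out of a frame with a
countable base: a map on basic elements is induced by a (unique) frame
homomorphism iff it satisfies three equational conditions, and then the
homomorphism is given by the expected formula on joins of basics. -/
theorem frame_hom_equational_characterization
    {L M : Type*} [Order.Frame L] [Order.Frame M]
    (b : ℕ → L) (hb : ∀ x : L, ∃ T : Set ℕ, x = ⨆ k ∈ T, b k)
    (f : ℕ → M) :
    ((∃ φ : L → M,
        (φ ⊤ = ⊤ ∧ (∀ x y : L, φ (x ⊓ y) = φ x ⊓ φ y) ∧
          (∀ S : Set L, φ (sSup S) = ⨆ x ∈ S, φ x)) ∧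
        (∀ n : ℕ, φ (b n) = f n)) ↔
      ((∀ T T' : Set ℕ, (⨆ k ∈ T, b k) = (⨆ m ∈ T', b m) →
          (⨆ k ∈ T, f k) = (⨆ m ∈ T', f m)) ∧
        (⨆ n : ℕ, f n) = ⊤ ∧
        (∀ T T' T'' : Set ℕ,
          (⨆ k ∈ T, b k) ⊓ (⨆ m ∈ T', b m) = (⨆ n ∈ T'', b n) →
          (⨆ k ∈ T, f k) ⊓ (⨆ m ∈ T', f m) = (⨆ n ∈ T'', f n)))) ∧
    (∀ φ ψ : L → M,
      ((φ ⊤ = ⊤ ∧ (∀ x y : L, φ (x ⊓ y) = φ x ⊓ φ y) ∧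
          (∀ S : Set L, φ (sSup S) = ⨆ x ∈ S, φ x)) ∧ (∀ n : ℕ, φ (b n) = f n)) →
      ((ψ ⊤ = ⊤ ∧ (∀ x y : L, ψ (x ⊓ y) = ψ x ⊓ ψ y) ∧
          (∀ S : Set L, ψ (sSup S) = ⨆ x ∈ S, ψ x)) ∧ (∀ n : ℕ, ψ (b n) = f n)) →
      φ = ψ) ∧
    (∀ φ : L → M,
      ((φ ⊤ = ⊤ ∧ (∀ x y : L, φ (x ⊓ y) = φ x ⊓ φ y) ∧
          (∀ S : Set L, φ (sSup S) = ⨆ x ∈ S, φ x)) ∧ (∀ n : ℕ, φ (b n) = f n)) →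
      ∀ T : Set ℕ, φ (⨆ n ∈ T, b n) = ⨆ n ∈ T, f n) := by
  -- key formula: any admissible φ satisfies φ (⨆ n∈T, b n) = ⨆ n∈T, f n
  have key : ∀ φ : L → M,
      ((φ ⊤ = ⊤ ∧ (∀ x y : L, φ (x ⊓ y) = φ x ⊓ φ y) ∧
          (∀ S : Set L, φ (sSup S) = ⨆ x ∈ S, φ x)) ∧ (∀ n : ℕ, φ (b n) = f n)) →
      ∀ T : Set ℕ, φ (⨆ n ∈ T, b n) = ⨆ n ∈ T, f n := by
    rintro φ ⟨⟨-, -, hsup⟩, hf⟩ T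
    have : (⨆ n ∈ T, b n) = sSup (b '' T) := (sSup_image).symm
    rw [this, hsup]
    rw [iSup_image]
    exact iSup_congr fun n => iSup_congr fun _ => hf n
  refine ⟨?_, ?_, key⟩
  · constructor
    · rintro ⟨φ, hφ⟩
      obtain ⟨⟨htop, hinf, hsup⟩, hf⟩ := hφ
      refine ⟨?_, ?_, ?_⟩
      · intro T T' h
        rw [← key φ ⟨⟨htop, hinf, hsup⟩, hf⟩ T, ← key φ ⟨⟨htop, hinf, hsup⟩, hf⟩ T', h]
      · obtain ⟨T, hT⟩ := hb ⊤
        apply le_antisymm le_top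
        have : φ ⊤ = ⨆ k ∈ T, f k := by rw [hT, key φ ⟨⟨htop, hinf, hsup⟩, hf⟩ T]
        calc ⊤ = φ ⊤ := htop.symm
          _ = ⨆ k ∈ T, f k := this
          _ ≤ ⨆ n : ℕ, f n := iSup₂_le fun i _ => le_iSup f i
      · intro T T' T'' h
        rw [← key φ ⟨⟨htop, hinf, hsup⟩, hf⟩ T, ← key φ ⟨⟨htop, hinf, hsup⟩, hf⟩ T',
          ← key φ ⟨⟨htop, hinf, hsup⟩, hf⟩ T'', ← hinf, h]
    · rintro ⟨h1, h2, h3⟩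
      set φ : L → M := fun x => ⨆ k ∈ (hb x).choose, f k with hφdef
      have hxeq : ∀ x : L, x = ⨆ k ∈ (hb x).choose, b k := fun x => (hb x).choose_spec
      have hw : ∀ (x : L) (T : Set ℕ), x = ⨆ k ∈ T, b k → φ x = ⨆ k ∈ T, f k :=
        fun x T h => h1 _ _ (((hxeq x).symm.trans h))
      have hfb : ∀ n : ℕ, φ (b n) = f n := by
        intro n
        have : b n = ⨆ k ∈ ({n} : Set ℕ), b k := by simp
        rw [hw (b n) {n} this]; simp
      refine ⟨φ, ⟨?_, ?_, ?_⟩, hfb⟩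
      · -- top
        obtain ⟨T, hT⟩ := hb (⊤ : L)
        have huniv : (⊤ : L) = ⨆ k ∈ (Set.univ : Set ℕ), b k := by
          apply le_antisymm _ le_top
          rw [hT]
          exact iSup₂_le fun i _ => le_iSup₂_of_le i (Set.mem_univ i) le_rfl
        rw [hw ⊤ Set.univ huniv]
        simpa using h2
      · -- binary meets
        intro x y
        rw [hw x _ (hxeq x), hw y _ (hxeq y)]
        apply Eq.symm
        apply h3
        rw [← hxeq x, ← hxeq y]
        exact hxeq (x ⊓ y)
      · -- sups
        intro S
        have hU : sSup S = ⨆ k ∈ ⋃ x ∈ S, (hb x).choose, b k := by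
          rw [Set.biUnion_eq_iUnion, iSup_iUnion]
          apply le_antisymm
          · exact sSup_le fun x hx => (hxeq x).le.trans
              (le_iSup_of_le (⟨x, hx⟩ : S) le_rfl)
          · exact iSup_le fun i => by
              rw [← hxeq i.1]; exact le_sSup i.2
        rw [hw _ _ hU, Set.biUnion_eq_iUnion, iSup_iUnion, iSup_subtype']
  · intro φ ψ hφ hψ
    funext x
    obtain ⟨T, hT⟩ := hb x
    rw [hT, key φ hφ T, key ψ hψ T]
end

section
/- Let X be a T0 topological space with a countable base of open sets B : ℕ → Set X (each B n open, and for every open U and x ∈ U there is n with x ∈ B n ⊆ U). Assume X is sober in the following sense: for every p : Set X → Prop with p ∅ false, p X true, p (U ∩ V) ↔ (p U ∧ p V) for all open U, V, and p (⋃_n U_n) ↔ ∃ n, p (U_n) for every sequence of opens, there exists x ∈ X with p U ↔ x ∈ U for all open U. Define ν : X → Set ℕ by ν x = {n | x ∈ B n}, J : Set ℕ → Set X by J T = ⋃_{i∈T} B i, and K : Set ℕ → Set ℕ → Prop by K S T = ∃ n, n ∈ S ∧ n ∈ T. Then ν is injective, and a set S ⊆ ℕ lies in the range of ν if and only if: (1)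 for all T, T' ⊆ ℕ, J T = J T' implies (K S T ↔ K S T'); (2) K S ℕ holds; and (3) for all T, T', T'' ⊆ ℕ, J T ∩ J T' = J T'' implies (K S T ∧ K S T' ↔ K S T''). -/
/-- The basic neighborhood filter of a countably based space. -/
def nbhdFilter {X : Type*} (B : ℕ → Set X) (x : X) : Set ℕ := {n : ℕ | x ∈ B n}

/-- The join map: the union of the basic opens indexed by a subset of ℕ. -/
def joinMap {X : Type*} (B : ℕ → Set X) (T : Set ℕ) : Set X := ⋃ i ∈ T, B i

/-- The intersection-inhabitation predicate. -/
def meetsMap (S T : Set ℕ) : Prop := ∃ n : ℕ, n ∈ S ∧ n ∈ T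

lemma joinMap_cover {X : Type*} [TopologicalSpace X] (B : ℕ → Set X)
    (hbase : ∀ U : Set X, IsOpen U → ∀ x ∈ U, ∃ n, x ∈ B n ∧ B n ⊆ U)
    {U : Set X} (hU : IsOpen U) : joinMap B {n | B n ⊆ U} = U := by
  apply Set.Subset.antisymm
  · intro x hx
    simp only [joinMap, Set.mem_iUnion] at hx
    obtain ⟨i, hi, hxi⟩ := hx
    exact hi hxi
  · intro x hx
    obtain ⟨n, hxn, hn⟩ := hbase U hU x hx
    exact Set.mem_iUnion₂.2 ⟨n, hn, hxn⟩

/-- For a countably based sober T0 space, the basic neighborhood filter is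
injective and its range is exactly the solution set of an equational system. -/
theorem sober_nbhd_filter_equalizer {X : Type*} [TopologicalSpace X] [T0Space X]
    (B : ℕ → Set X) (hopen : ∀ n, IsOpen (B n))
    (hbase : ∀ U : Set X, IsOpen U → ∀ x ∈ U, ∃ n, x ∈ B n ∧ B n ⊆ U)
    (hsober : ∀ p : Set X → Prop,
      ¬ p ∅ → p Set.univ →
      (∀ U V : Set X, IsOpen U → IsOpen V → (p (U ∩ V) ↔ (p U ∧ p V))) →
      (∀ U : ℕ → Set X, (∀ n, IsOpen (U n)) → (p (⋃ n, U n) ↔ ∃ n, p (U n))) →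
      ∃ x : X, ∀ U : Set X, IsOpen U → (p U ↔ x ∈ U)) :
    Function.Injective (nbhdFilter B) ∧
    (∀ S : Set ℕ, S ∈ Set.range (nbhdFilter B) ↔
      ((∀ T T' : Set ℕ, joinMap B T = joinMap B T' → (meetsMap S T ↔ meetsMap S T')) ∧
       meetsMap S Set.univ ∧
       (∀ T T' T'' : Set ℕ, joinMap B T ∩ joinMap B T' = joinMap B T'' →
         (meetsMap S T ∧ meetsMap S T' ↔ meetsMap S T'')))) := by
  have hmem : ∀ (x : X) (T : Set ℕ), meetsMap (nbhdFilter B x) T ↔ x ∈ joinMap B T := by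
    intro x T
    constructor
    · rintro ⟨n, hn, hnT⟩
      exact Set.mem_iUnion₂.2 ⟨n, hnT, hn⟩
    · intro hx
      obtain ⟨n, hnT, hxn⟩ := Set.mem_iUnion₂.1 hx
      exact ⟨n, hxn, hnT⟩
  constructor
  · intro x y hxy
    refine (Inseparable.eq ?_)
    rw [inseparable_iff_forall_isOpen]
    have key : ∀ a b : X, nbhdFilter B a = nbhdFilter B b → ∀ s : Set X, IsOpen s →
        a ∈ s → b ∈ s := by
      intro a b hab s hs has
      obtain ⟨n, han, hn⟩ := hbase s hs a has
      have : n ∈ nbhdFilter B b := hab ▸ han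
      exact hn this
    intro s hs
    exact ⟨key x y hxy s hs, key y x hxy.symm s hs⟩
  · intro S
    constructor
    · rintro ⟨x, rfl⟩
      refine ⟨fun T T' h => by rw [hmem, hmem, h], ?_, fun T T' T'' h => ?_⟩
      · obtain ⟨n, hxn, -⟩ := hbase Set.univ isOpen_univ x trivial
        exact ⟨n, hxn, trivial⟩
      · rw [hmem, hmem, hmem, ← h]
        exact (Set.mem_inter_iff x _ _).symm
    · rintro ⟨h1, h2, h3⟩
      set p : Set X → Prop := fun U => meetsMap S {n | B n ⊆ U} with hp
      have hmono : ∀ U V : Set X, U ⊆ V → p U → p V := by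
        rintro U V hUV ⟨n, hnS, hnU⟩
        exact ⟨n, hnS, Set.Subset.trans hnU hUV⟩
      have hpempty : ¬ p ∅ := by
        rintro ⟨n, hnS, hn⟩
        have hJ : joinMap B {n} = joinMap B (∅ : Set ℕ) := by
          simp only [joinMap]
          simp [Set.subset_empty_iff.1 hn]
        have := (h1 {n} ∅ hJ).1 ⟨n, hnS, rfl⟩
        obtain ⟨m, -, hm⟩ := this
        exact hm
      have hpuniv : p Set.univ := by
        obtain ⟨n, hnS, -⟩ := h2
        exact ⟨n, hnS, Set.subset_univ _⟩
      have hpinter : ∀ U V : Set X, IsOpen U → IsOpen V → (p (U ∩ V) ↔ (p U ∧ p V)) := by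
        intro U V hU hV
        have := h3 {n | B n ⊆ U} {n | B n ⊆ V} {n | B n ⊆ U ∩ V}
          (by rw [joinMap_cover B hbase hU, joinMap_cover B hbase hV,
            joinMap_cover B hbase (hU.inter hV)])
        exact this.symm
      have hpunion : ∀ U : ℕ → Set X, (∀ n, IsOpen (U n)) →
          (p (⋃ n, U n) ↔ ∃ n, p (U n)) := by
        intro U hU
        constructor
        · intro hpu
          have hJ : joinMap B {m | B m ⊆ ⋃ n, U n} = joinMap B {m | ∃ n, B m ⊆ U n} := by
            rw [joinMap_cover B hbase (isOpen_iUnion hU)]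
            apply Set.Subset.antisymm
            · intro x hx
              obtain ⟨n, hxn⟩ := Set.mem_iUnion.1 hx
              obtain ⟨m, hxm, hm⟩ := hbase (U n) (hU n) x hxn
              exact Set.mem_iUnion₂.2 ⟨m, ⟨n, hm⟩, hxm⟩
            · intro x hx
              obtain ⟨m, ⟨n, hm⟩, hxm⟩ := Set.mem_iUnion₂.1 hx
              exact Set.mem_iUnion.2 ⟨n, hm hxm⟩
          obtain ⟨m, hmS, n, hmn⟩ := (h1 _ _ hJ).1 hpu
          exact ⟨n, m, hmS, hmn⟩
        · rintro ⟨n, hpn⟩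
          exact hmono (U n) _ (Set.subset_iUnion U n) hpn
      obtain ⟨x, hx⟩ := hsober p hpempty hpuniv hpinter hpunion
      -- S is saturated: m ∈ S and B m ⊆ B n imply n ∈ S
      have hsat : ∀ m n : ℕ, m ∈ S → B m ⊆ B n → n ∈ S := by
        intro m n hm hmn
        have hJ : joinMap B {n} ∩ joinMap B {m} = joinMap B {m} := by
          simp only [joinMap, Set.mem_singleton_iff, Set.iUnion_iUnion_eq_left]
          exact Set.inter_eq_self_of_subset_right hmn
        have := (h3 {n} {m} {m} hJ).2 ⟨m, hm, rfl⟩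
        obtain ⟨k, hkS, hk⟩ := this.1
        exact hk ▸ hkS
      refine ⟨x, ?_⟩
      ext n
      simp only [nbhdFilter, Set.mem_setOf_eq]
      rw [← hx (B n) (hopen n)]
      constructor
      · rintro ⟨m, hmS, hm⟩
        exact hsat m n hmS hm
      · intro hnS
        exact ⟨n, hnS, Set.Subset.refl _⟩
end

section
/- Let X be a type admitting a surjection e : ℕ → (ℕ → X). Then X has the multivalued fixed-point property: for every f : X → Set X such that f x is nonempty for every x ∈ X, there exists x ∈ X with x ∈ f x. -/
/-- The synthetic Recursion Theorem: if there is a surjection ℕ → (ℕ → X),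
then every multivalued endomap of X has a fixed point. -/
theorem recursion_theorem {X : Type*} (e : ℕ → (ℕ → X))
    (he : Function.Surjective e)
    (f : X → Set X) (hf : ∀ x : X, (f x).Nonempty) :
    ∃ x : X, x ∈ f x := by
  choose g hg using fun n => hf (e n n)
  obtain ⟨k, hk⟩ := he g
  exact ⟨g k, congrFun hk k ▸ hg k⟩
end
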